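/- arXiv:2308.08874 — 5 statements merged into one kernel-verified Lean document; each statement's English description precedes it below -/
import Mathlib

section
/- Let k, m ≥ 1 be integers and α ≥ 1 a real number. Let D be a probability distribution on [k]^m with D(x) > 0 for every x ∈ [k]^m, such that for all x, x' ∈ [k]^m that differ in exactly one coordinate, D(x)/D(x') ≤ α (i.e., D is α-log-Lipschitz). Then D is (α·k/(α + k − 1))-dispersed. -/
/-- A distribution `D` on `[k]^m` is `ρ`-dispersed if for every coordinate `j` and every
point `x`, `D x ≤ ρ · (1/k) · ∑_t D (x with j-th coordinate replaced by t)`. -/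
def Dispersed {k m : ℕ} (ρ : ℝ) (D : (Fin m → Fin k) → ℝ) : Prop :=
  ∀ (j : Fin m) (x : Fin m → Fin k),
    D x ≤ ρ * (1 / (k : ℝ)) * ∑ t : Fin k, D (Function.update x j t)

/-! Along a coordinate line through `x`, each of the other `k - 1` points carries mass at least
`D x / α`, so the line carries at least `D x (1 + (k - 1)/α)`; the dispersion constant
`α k / (α + k - 1)` is exactly the factor turning this lower bound into `D x`. -/

theorem add_card_sub_one_mul_le_sum {ι : Type*} [Fintype ι] [DecidableEq ι] (f : ι → ℝ)
    (i₀ : ι) {c : ℝ} (h : ∀ i ≠ i₀, c ≤ f i) :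
    f i₀ + (Fintype.card ι - 1) * c ≤ ∑ i, f i := by
  rw [← Finset.add_sum_erase _ _ (Finset.mem_univ i₀)]
  gcongr
  calc ((Fintype.card ι : ℝ) - 1) * c = ∑ _i ∈ Finset.univ.erase i₀, c := by
        rw [Finset.sum_const, Finset.card_erase_of_mem (Finset.mem_univ i₀), nsmul_eq_mul,
          Finset.card_univ, Nat.cast_pred (Fintype.card_pos_iff.mpr ⟨i₀⟩)]
    _ ≤ ∑ i ∈ Finset.univ.erase i₀, f i :=
        Finset.sum_le_sum fun i hi => h i (Finset.ne_of_mem_erase hi)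

theorem le_mul_of_add_sub_one_mul_div_le {α k a S : ℝ} (hα : 1 ≤ α) (hk : 0 < k)
    (h : a + (k - 1) * (a / α) ≤ S) : a ≤ α * k / (α + k - 1) * (1 / k) * S := by
  have hden : 0 < α + k - 1 := by linarith
  have hcoef : 0 ≤ α * k / (α + k - 1) * (1 / k) := by positivity
  calc a = α * k / (α + k - 1) * (1 / k) * (a + (k - 1) * (a / α)) := by
        field_simp
        ring
    _ ≤ α * k / (α + k - 1) * (1 / k) * S := mul_le_mul_of_nonneg_left h hcoef

theorem logLipschitz_dispersed_general {k m : ℕ}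
    (α : ℝ) (hα : 1 ≤ α)
    (D : (Fin m → Fin k) → ℝ)
    (hDpos : ∀ x, 0 < D x)
    (hLip : ∀ (x : Fin m → Fin k) (j : Fin m) (t : Fin k), t ≠ x j →
      D x / D (Function.update x j t) ≤ α) :
    Dispersed (α * (k : ℝ) / (α + (k : ℝ) - 1)) D := by
  intro j x
  have hk : (0 : ℝ) < k := by exact_mod_cast (x j).pos
  have hline := add_card_sub_one_mul_le_sum (fun t => D (Function.update x j t)) (x j)
    (c := D x / α) fun t ht => (div_le_comm₀ (hDpos _) (by linarith)).mp (hLip x j t ht)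
  rw [Function.update_eq_self, Fintype.card_fin] at hline
  exact le_mul_of_add_sub_one_mul_div_le hα hk hline

/-- Any `α`-log-Lipschitz probability distribution on `[k]^m` (everywhere positive, with
`D x / D x' ≤ α` whenever `x, x'` differ in exactly one coordinate) is
`(α·k/(α + k − 1))`-dispersed. -/
theorem logLipschitz_dispersed {k m : ℕ} (hk : 1 ≤ k) (hm : 1 ≤ m)
    (α : ℝ) (hα : 1 ≤ α)
    (D : (Fin m → Fin k) → ℝ)
    (hDpos : ∀ x, 0 < D x) (hD1 : ∑ x, D x = 1)
    (hLip : ∀ (x : Fin m → Fin k) (j : Fin m) (t : Fin k), t ≠ x j →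
      D x / D (Function.update x j t) ≤ α) :
    Dispersed (α * (k : ℝ) / (α + (k : ℝ) - 1)) D :=
  logLipschitz_dispersed_general α hα D hDpos hLip
end

section
/- Let F be a finite field with |F| ≥ 2, let n ≥ 1, and let d : F^n × F^n → ℝ be a metric (nonnegative, symmetric, vanishing on the diagonal, and satisfying the triangle inequality) such that: (i) d(x+z, y+z) = d(x,y) for all x, y, z ∈ F^n, and (ii) d(a·x, a·y) = d(x,y) for all x, y ∈ F^n and every nonzero a ∈ F. Let S and T be F-linear subspaces of F^n and let ε > 0. If there exists s ∈ S with d(s,t) > ε for every t ∈ T, then the number of elements r ∈ S for which there exists t ∈ T with d(r,t) ≤ ε/2 is at most |S| / (|F| − 1). -/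
/-!
Fix `s ∈ S` at distance more than `ε` from `T`, and let `B` be the set of points of `S` within
`ε / 2` of `T`. The map `(r, u) ↦ r + u • s` from `B × Fˣ` to `S` is injective: if
`r₁ - r₂ = c • s` with `c ≠ 0`, then by the triangle inequality and invariance under translation
and negation `c • s` is within `ε` of a point of `T`, and rescaling by `c⁻¹` puts `s` within `ε` of `T`.
Hence `|B| (|F| - 1) ≤ |S|`.
-/

section InvariantDistance

variable {F V : Type*} [Field F] [AddCommGroup V] [Module F V] {d : V → V → ℝ}

theorem sub_sub_le_add_of_invariant (htri : ∀ x y z, d x z ≤ d x y + d y z)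
    (hshift : ∀ x y z, d (x + z) (y + z) = d x y) (hneg : ∀ x y, d (-x) (-y) = d x y)
    (x y z w : V) : d (x - y) (z - w) ≤ d x z + d y w := by
  calc d (x - y) (z - w) ≤ d (x - y) (z - y) + d (z - y) (z - w) := htri _ _ _
    _ = d x z + d y w := by
      rw [sub_eq_add_neg x, sub_eq_add_neg z y, hshift, sub_eq_add_neg z w, add_comm z,
        add_comm z, hshift, hneg]

theorem sub_ne_smul_of_forall_lt_dist (htri : ∀ x y z, d x z ≤ d x y + d y z)
    (hshift : ∀ x y z, d (x + z) (y + z) = d x y)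
    (hscale : ∀ a : F, a ≠ 0 → ∀ x y, d (a • x) (a • y) = d x y)
    {T : Submodule F V} {s : V} {ε : ℝ} (hs : ∀ t ∈ T, ε < d s t) {r₁ r₂ : V}
    (h₁ : ∃ t ∈ T, d r₁ t ≤ ε / 2) (h₂ : ∃ t ∈ T, d r₂ t ≤ ε / 2) {c : F} (hc : c ≠ 0) :
    r₁ - r₂ ≠ c • s := by
  obtain ⟨t₁, ht₁, hd₁⟩ := h₁
  obtain ⟨t₂, ht₂, hd₂⟩ := h₂
  intro h
  have hneg : ∀ x y, d (-x) (-y) = d x y := by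
    simpa using hscale (-1) (neg_ne_zero.2 one_ne_zero)
  have hclose : d (c • s) (t₁ - t₂) ≤ ε := by
    rw [← h]
    linarith [sub_sub_le_add_of_invariant htri hshift hneg r₁ r₂ t₁ t₂]
  have hfar := hs (c⁻¹ • (t₁ - t₂)) (T.smul_mem _ (T.sub_mem ht₁ ht₂))
  rw [← hscale c⁻¹ (inv_ne_zero hc), smul_smul, inv_mul_cancel₀ hc, one_smul] at hclose
  linarith

end InvariantDistance

theorem Submodule.ncard_mul_card_units_le_card {F V : Type*} [Field F] [AddCommGroup V]
    [Module F V] {S : Submodule F V} [Finite S] {B : Set V} (hBS : B ⊆ S) {s : V} (hs : s ∈ S)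
    (hB : ∀ r₁ ∈ B, ∀ r₂ ∈ B, ∀ c : F, c ≠ 0 → r₁ - r₂ ≠ c • s) :
    B.ncard * Nat.card Fˣ ≤ Nat.card S := by
  let f : B × Fˣ → S := fun p => ⟨p.1 + (p.2 : F) • s, S.add_mem (hBS p.1.2) (S.smul_mem _ hs)⟩
  have hf : Function.Injective f := by
    rintro ⟨⟨r₁, hr₁⟩, u₁⟩ ⟨⟨r₂, hr₂⟩, u₂⟩ h
    have h' : r₁ + (u₁ : F) • s = r₂ + (u₂ : F) • s := congrArg Subtype.val h
    obtain rfl : u₁ = u₂ := by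
      by_contra hu
      refine hB r₁ hr₁ r₂ hr₂ _ (sub_ne_zero.2 fun he => hu (Units.ext he.symm)) ?_
      rw [sub_smul, sub_eq_sub_iff_add_eq_add, h', add_comm]
    obtain rfl : r₁ = r₂ := add_right_cancel h'
    rfl
  rw [← Nat.card_coe_set_eq, ← Nat.card_prod]
  exact Nat.card_le_card_of_injective f hf

theorem far_point_in_subspace_count_general {F : Type*} [Field F] [Fintype F] {n : ℕ}
    (d : (Fin n → F) → (Fin n → F) → ℝ)
    (htri : ∀ x y z, d x z ≤ d x y + d y z)
    (hshift : ∀ x y z, d (x + z) (y + z) = d x y)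
    (hscale : ∀ a : F, a ≠ 0 → ∀ x y, d (a • x) (a • y) = d x y)
    (S T : Submodule F (Fin n → F)) (ε : ℝ)
    (hfar : ∃ s ∈ S, ∀ t ∈ T, ε < d s t) :
    ((Set.ncard {r : Fin n → F | r ∈ S ∧ ∃ t ∈ T, d r t ≤ ε / 2}) : ℝ)
      ≤ (Nat.card S : ℝ) / ((Fintype.card F : ℝ) - 1) := by
  obtain ⟨s, hsS, hs⟩ := hfar
  have hcount := S.ncard_mul_card_units_le_card (B := {r | r ∈ S ∧ ∃ t ∈ T, d r t ≤ ε / 2})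
    (fun _ hr => hr.1) hsS fun r₁ hr₁ r₂ hr₂ _ hc =>
      sub_ne_smul_of_forall_lt_dist htri hshift hscale hs hr₁.2 hr₂.2 hc
  have hq : 1 < Fintype.card F := Fintype.one_lt_card
  rw [Nat.card_units, Nat.card_eq_fintype_card] at hcount
  rw [le_div_iff₀ (sub_pos.2 (by exact_mod_cast hq))]
  have := (Nat.cast_le (α := ℝ)).2 hcount
  rwa [Nat.cast_mul, Nat.cast_sub hq.le, Nat.cast_one] at this

/-- If `d` is a shift- and (nonzero-)scaling-invariant metric on `F^n`, `S, T` are linear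
subspaces, and some `s ∈ S` has `d(s,t) > ε` for all `t ∈ T`, then the number of `r ∈ S`
that are `(ε/2)`-close to `T` is at most `|S| / (|F| − 1)`. -/
theorem far_point_in_subspace_count {F : Type*} [Field F] [Fintype F]
    (hF : 2 ≤ Fintype.card F) {n : ℕ} (hn : 1 ≤ n)
    (d : (Fin n → F) → (Fin n → F) → ℝ)
    (hnonneg : ∀ x y, 0 ≤ d x y)
    (hrefl : ∀ x, d x x = 0)
    (hsymm : ∀ x y, d x y = d y x)
    (htri : ∀ x y z, d x z ≤ d x y + d y z)
    (hshift : ∀ x y z, d (x + z) (y + z) = d x y)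
    (hscale : ∀ a : F, a ≠ 0 → ∀ x y, d (a • x) (a • y) = d x y)
    (S T : Submodule F (Fin n → F)) (ε : ℝ) (hε : 0 < ε)
    (hfar : ∃ s ∈ S, ∀ t ∈ T, ε < d s t) :
    ((Set.ncard {r : Fin n → F | r ∈ S ∧ ∃ t ∈ T, d r t ≤ ε / 2}) : ℝ)
      ≤ (Nat.card S : ℝ) / ((Fintype.card F : ℝ) - 1) :=
  far_point_in_subspace_count_general d htri hshift hscale S T ε hfar
end

section
/- Let κ ≥ 1 be an integer and k = 2^κ. Let ρ > 0 and ε > 0 be real numbers, and let ε_1,...,ε_k be nonnegative reals with ∑_{i=1}^{k} ε_i > k·ε/ρ. Then there exist an integer b ∈ {0,1,...,κ} and a subset I ⊆ {1,...,k} such that ε_i ≥ k·ε/(2^{b+1}·ρ) for every i ∈ I and |I| ≥ 2^b/(4κ). -/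
/-!
Let `T = k·ε/ρ` and let `Sᵦ` be the set of indices with `εᵢ ≥ T/2^{b+1}`. If every level were
small, `|Sᵦ| < 2^b/(4κ)`, then `S₀ = ∅`, and peeling off the layers `Sⱼ \ Sⱼ₋₁` (where
`εᵢ < T/2^j`) bounds the mass on `S_κ` by `∑_{j=1}^{κ} |Sⱼ|·T/2^j ≤ T/4`, while the `2^κ`
indices outside `S_κ` carry at most `2^κ·T/2^{κ+1} = T/2`. So `∑ εᵢ ≤ 3T/4 < T`.
-/

open Finset

section DyadicLevel

variable {ι : Type*} [Fintype ι] (f : ι → ℝ) (t : ℝ)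

noncomputable def dyadicLevel (b : ℕ) : Finset ι := {i | t / 2 ^ (b + 1) ≤ f i}

variable {f t}

theorem mem_dyadicLevel {b : ℕ} {i : ι} : i ∈ dyadicLevel f t b ↔ t / 2 ^ (b + 1) ≤ f i := by
  simp [dyadicLevel]

theorem dyadicLevel_mono (ht : 0 ≤ t) : Monotone (dyadicLevel f t) := by
  intro a b hab i hi
  rw [mem_dyadicLevel] at hi ⊢
  refine le_trans ?_ hi
  exact div_le_div_of_nonneg_left ht (by positivity) (pow_le_pow_right₀ one_le_two (by omega))

theorem sum_dyadicLevel_le (ht : 0 ≤ t) (h0 : dyadicLevel f t 0 = ∅) (n : ℕ) :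
    ∑ i ∈ dyadicLevel f t n, f i ≤ ∑ j ∈ Icc 1 n, #(dyadicLevel f t j) * (t / 2 ^ j) := by
  classical
  induction n with
  | zero => simp [h0]
  | succ n ih =>
    have hlayer : ∑ i ∈ dyadicLevel f t (n + 1) \ dyadicLevel f t n, f i
        ≤ #(dyadicLevel f t (n + 1)) * (t / 2 ^ (n + 1)) :=
      calc _ ≤ #(dyadicLevel f t (n + 1) \ dyadicLevel f t n) • (t / 2 ^ (n + 1)) := by
            refine sum_le_card_nsmul _ _ _ fun i hi => ?_
            have hi : i ∉ dyadicLevel f t n := (mem_sdiff.mp hi).2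
            rw [mem_dyadicLevel, not_le] at hi
            exact hi.le
        _ ≤ _ := by
            rw [nsmul_eq_mul]
            gcongr
            exact sdiff_subset
    rw [sum_Icc_succ_top (by omega), ← sum_sdiff (dyadicLevel_mono ht n.le_succ)]
    linarith

theorem sum_compl_dyadicLevel_le [DecidableEq ι] (ht : 0 ≤ t) (n : ℕ) :
    ∑ i ∈ (dyadicLevel f t n)ᶜ, f i ≤ Fintype.card ι * (t / 2 ^ (n + 1)) :=
  calc _ ≤ #(dyadicLevel f t n)ᶜ • (t / 2 ^ (n + 1)) := by
        refine sum_le_card_nsmul _ _ _ fun i hi => ?_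
        rw [mem_compl, mem_dyadicLevel, not_le] at hi
        exact hi.le
    _ ≤ _ := by
        rw [nsmul_eq_mul]
        gcongr
        exact card_le_univ _

theorem sum_le_dyadicLevel_layers (ht : 0 ≤ t) (h0 : dyadicLevel f t 0 = ∅) (n : ℕ) :
    ∑ i, f i ≤ ∑ j ∈ Icc 1 n, #(dyadicLevel f t j) * (t / 2 ^ j)
      + Fintype.card ι * (t / 2 ^ (n + 1)) := by
  classical
  rw [← sum_add_sum_compl (dyadicLevel f t n)]
  exact add_le_add (sum_dyadicLevel_le ht h0 n) (sum_compl_dyadicLevel_le ht n)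

/- The case splits on `κ = 0` below are only about the junk value `2 ^ b / (4 * 0) = 0`. -/
theorem sum_le_of_card_dyadicLevel_lt {κ : ℕ} (hι : Fintype.card ι = 2 ^ κ) (ht : 0 ≤ t)
    (hsmall : ∀ b ≤ κ, (#(dyadicLevel f t b) : ℝ) < 2 ^ b / (4 * κ)) :
    ∑ i, f i ≤ 3 * t / 4 := by
  have h0 : dyadicLevel f t 0 = ∅ := by
    have hone : (2 : ℝ) ^ 0 / (4 * κ) ≤ 1 := by
      rcases Nat.eq_zero_or_pos κ with rfl | hκ
      · simp
      · rw [pow_zero, div_le_one (by positivity)]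
        have : (1 : ℝ) ≤ κ := by exact_mod_cast hκ
        linarith
    have hlt : #(dyadicLevel f t 0) < 1 := by exact_mod_cast (hsmall 0 κ.zero_le).trans_le hone
    exact card_eq_zero.mp (Nat.lt_one_iff.mp hlt)
  have hlayers : ∑ j ∈ Icc 1 κ, #(dyadicLevel f t j) * (t / 2 ^ j) ≤ t / 4 :=
    calc _ ≤ ∑ j ∈ Icc 1 κ, 2 ^ j / (4 * κ) * (t / 2 ^ j) := by
          refine sum_le_sum fun j hj => ?_
          gcongr
          exact (hsmall j (mem_Icc.mp hj).2).le
      _ = ∑ _j ∈ Icc 1 κ, t / (4 * κ) := sum_congr rfl fun j _ => by field_simp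
      _ = κ * (t / (4 * κ)) := by simp
      _ ≤ t / 4 := by
          rcases Nat.eq_zero_or_pos κ with rfl | hκ
          · simpa using by positivity
          · exact (by field_simp : (κ : ℝ) * (t / (4 * κ)) = t / 4).le
  have htail : (Fintype.card ι : ℝ) * (t / 2 ^ (κ + 1)) = t / 2 := by
    rw [hι, pow_succ]
    push_cast
    field_simp
  have := sum_le_dyadicLevel_layers ht h0 κ
  linarith

end DyadicLevel

theorem dyadic_level_many_large_general {κ : ℕ} {k : ℕ} (hk : k = 2 ^ κ)
    (ρ ε : ℝ) (hρ : 0 < ρ) (hε : 0 < ε)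
    (εs : Fin k → ℝ)
    (hsum : (k : ℝ) * ε / ρ < ∑ i, εs i) :
    ∃ (b : ℕ) (I : Finset (Fin k)), b ≤ κ ∧
      (∀ i ∈ I, (k : ℝ) * ε / ((2 : ℝ) ^ (b + 1) * ρ) ≤ εs i) ∧
      (2 : ℝ) ^ b / (4 * (κ : ℝ)) ≤ (I.card : ℝ) := by
  by_contra! h
  have hT : 0 < (k : ℝ) * ε / ρ := by
    have : 0 < k := hk ▸ by positivity
    positivity
  have hsmall : ∀ b ≤ κ, (#(dyadicLevel εs ((k : ℝ) * ε / ρ) b) : ℝ) < 2 ^ b / (4 * κ) := by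
    refine fun b hb => h b _ hb fun i hi => ?_
    rw [div_mul_eq_div_div_swap]
    exact mem_dyadicLevel.mp hi
  have := sum_le_of_card_dyadicLevel_lt (by simp [hk]) hT.le hsmall
  linarith

/-- If `∑ εᵢ > k·ε/ρ` with `k = 2^κ`, then there is a dyadic level `b ≤ κ` and a set `I`
of indices with `εᵢ ≥ k·ε/(2^{b+1}·ρ)` for all `i ∈ I` and `|I| ≥ 2^b/(4κ)`. -/
theorem dyadic_level_many_large {κ : ℕ} (hκ : 1 ≤ κ) {k : ℕ} (hk : k = 2 ^ κ)
    (ρ ε : ℝ) (hρ : 0 < ρ) (hε : 0 < ε)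
    (εs : Fin k → ℝ) (hεs0 : ∀ i, 0 ≤ εs i)
    (hsum : (k : ℝ) * ε / ρ < ∑ i, εs i) :
    ∃ (b : ℕ) (I : Finset (Fin k)), b ≤ κ ∧
      (∀ i ∈ I, (k : ℝ) * ε / ((2 : ℝ) ^ (b + 1) * ρ) ≤ εs i) ∧
      (2 : ℝ) ^ b / (4 * (κ : ℝ)) ≤ (I.card : ℝ) :=
  dyadic_level_many_large_general hk ρ ε hρ hε εs hsum
end

section
/- Let n ≥ 1 and let p_1,...,p_n be nonnegative reals with ∑_{i=1}^{n} p_i = 1. Define a_i := ⌊6n·p_i⌋ + 2 for i ∈ {1,...,n}. Then: (i) ∑_{i=1}^{n} a_i ≤ 8n, so that a_{n+1} := 8n − ∑_{i=1}^{n} a_i is a nonnegative integer; (ii) 0 ≤ a_i ≤ 8n for every i ∈ {1,...,n+1} and ∑_{i=1}^{n+1} a_i = 8n, so that D'(i) := a_i/(8n) defines an 8n-grained probability distribution on {1,...,n+1}; and (iii) a_i/(8n) ≥ p_i/2 for every i ∈ {1,...,n}. -/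
/-!
Since `⌊6n pᵢ⌋ ≤ 6n pᵢ` and `∑ pᵢ = 1`, the floors sum to at most `6n`, and the `+ 2`s add `2n`,
so `∑ aᵢ ≤ 8n`. For (iii), `⌊6n pᵢ⌋ + 2 > 6n pᵢ + 1 ≥ 4n pᵢ`.
-/

/-- The last granularity output by the granularising algorithm: `a_{n+1} = 8n − ∑ᵢ aᵢ`. -/
def lastGrain {n : ℕ} (a : Fin n → ℕ) : ℕ := 8 * n - ∑ i, a i

/-- The `8n`-grained distribution on `{1,...,n+1}` defined by the granularities:
`D'(i) = aᵢ/(8n)` for `i ≤ n` and `D'(n+1) = a_{n+1}/(8n)`. -/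
noncomputable def granDist {n : ℕ} (a : Fin n → ℕ) : Fin (n + 1) → ℝ :=
  Fin.snoc (fun i => (a i : ℝ) / (8 * n)) ((lastGrain a : ℝ) / (8 * n))

open Finset

lemma sum_natFloor_mul_le {ι : Type*} (s : Finset ι) {c : ℝ} (hc : 0 ≤ c) {p : ι → ℝ}
    (hp : ∀ i ∈ s, 0 ≤ p i) : ((∑ i ∈ s, ⌊c * p i⌋₊ : ℕ) : ℝ) ≤ c * ∑ i ∈ s, p i := by
  push_cast
  rw [mul_sum]
  exact sum_le_sum fun i hi => Nat.floor_le (mul_nonneg hc (hp i hi))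

lemma sum_natFloor_add_two_le {n : ℕ} {p : Fin n → ℝ} (hp0 : ∀ i, 0 ≤ p i)
    (hp1 : ∑ i, p i = 1) : ∑ i, (⌊(6 * (n : ℝ)) * p i⌋₊ + 2) ≤ 8 * n := by
  have hfloor := sum_natFloor_mul_le univ (c := 6 * (n : ℝ)) (by positivity) fun i _ => hp0 i
  rw [hp1, mul_one] at hfloor
  have : ∑ i, ⌊(6 * (n : ℝ)) * p i⌋₊ ≤ 6 * n := by exact_mod_cast hfloor
  simp only [sum_add_distrib, sum_const, card_univ, Fintype.card_fin, smul_eq_mul]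
  omega

lemma half_le_natFloor_add_two_div {m : ℝ} (hm : 0 < m) (x : ℝ) :
    x / 2 ≤ (⌊6 * m * x⌋₊ + 2 : ℕ) / (8 * m) := by
  rw [div_le_div_iff₀ two_pos (by positivity)]
  push_cast
  rcases le_or_gt 0 x with hx | hx
  · have := Nat.lt_floor_add_one (6 * m * x)
    nlinarith
  · nlinarith [Nat.cast_nonneg (α := ℝ) ⌊6 * m * x⌋₊]

section grains

variable {n : ℕ} (a : Fin n → ℕ)

lemma lastGrain_le : lastGrain a ≤ 8 * n := Nat.sub_le _ _

lemma sum_add_lastGrain {a : Fin n → ℕ} (h : ∑ i, a i ≤ 8 * n) :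
    ∑ i, a i + lastGrain a = 8 * n :=
  Nat.add_sub_cancel' h

lemma granDist_nonneg (j : Fin (n + 1)) : 0 ≤ granDist a j := by
  induction j using Fin.lastCases with
  | last => simp only [granDist, Fin.snoc_last]; positivity
  | cast i => simp only [granDist, Fin.snoc_castSucc]; positivity

lemma exists_granDist_eq_div (j : Fin (n + 1)) : ∃ c : ℕ, granDist a j = c / (8 * n) := by
  induction j using Fin.lastCases with
  | last => exact ⟨lastGrain a, by simp only [granDist, Fin.snoc_last]⟩
  | cast i => exact ⟨a i, by simp only [granDist, Fin.snoc_castSucc]⟩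

lemma sum_granDist {a : Fin n → ℕ} (hn : 0 < n) (h : ∑ i, a i ≤ 8 * n) :
    ∑ j, granDist a j = 1 := by
  rw [Fin.sum_univ_castSucc]
  simp only [granDist, Fin.snoc_castSucc, Fin.snoc_last]
  rw [← sum_div, ← add_div, div_eq_one_iff_eq (by positivity)]
  exact_mod_cast sum_add_lastGrain h

end grains

/-- Properties of the granularising algorithm `aᵢ = ⌊6n·pᵢ⌋ + 2`:
(i) `∑ aᵢ ≤ 8n`, so `a_{n+1} = 8n − ∑ aᵢ` is a nonnegative integer;
(ii) `0 ≤ aᵢ ≤ 8n` for all `i ∈ {1,...,n+1}`, they sum to `8n`, and `D'(i) = aᵢ/(8n)`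
defines an `8n`-grained probability distribution on `{1,...,n+1}`;
(iii) `aᵢ/(8n) ≥ pᵢ/2` for every `i ∈ {1,...,n}`. -/
theorem granularise_properties {n : ℕ} (hn : 1 ≤ n)
    (p : Fin n → ℝ) (hp0 : ∀ i, 0 ≤ p i) (hp1 : ∑ i, p i = 1)
    (a : Fin n → ℕ) (ha : ∀ i, a i = ⌊(6 * (n : ℝ)) * p i⌋₊ + 2) :
    ((∑ i, a i) ≤ 8 * n) ∧
    ((∀ i, a i ≤ 8 * n) ∧ lastGrain a ≤ 8 * n ∧ (∑ i, a i) + lastGrain a = 8 * n) ∧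
    ((∀ j : Fin (n + 1), 0 ≤ granDist a j) ∧ (∑ j, granDist a j = 1) ∧
      (∀ j : Fin (n + 1), ∃ c : ℕ, granDist a j = (c : ℝ) / (8 * n))) ∧
    (∀ i : Fin n, p i / 2 ≤ (a i : ℝ) / (8 * n)) := by
  have hsum : ∑ i, a i ≤ 8 * n := by
    simpa only [ha] using sum_natFloor_add_two_le hp0 hp1
  have ha_le : ∀ i, a i ≤ 8 * n := fun i =>
    (single_le_sum (fun j _ => Nat.zero_le (a j)) (mem_univ i)).trans hsum
  refine ⟨hsum, ⟨ha_le, lastGrain_le a, sum_add_lastGrain hsum⟩,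
    ⟨granDist_nonneg a, sum_granDist hn hsum, exists_granDist_eq_div a⟩, fun i => ?_⟩
  rw [ha i]
  exact half_le_natFloor_add_two_div (by exact_mod_cast hn) (p i)
end

section
/- Let n ≥ 1, let ε > 0, let p_1,...,p_n be nonnegative reals with ∑_{i=1}^{n} p_i = 1, and let D be the probability distribution on {1,...,n} with D(i) = p_i. Let a_1,...,a_{n+1} be the output of the granularising algorithm on p, and let D' be the probability distribution on {1,...,n+1} with D'(i) = a_i/(8n). Let X ∈ {0,1}^n, let L be a nonempty subset of {0,1}^n, let X' := g^cat(X) ∈ {0,1}^{n+1}, and let L_0 := {g^cat(Y) : Y ∈ L}. If d_D(X, L) > ε, then d_{D'}(X', L_0) > ε/2. Moreover, if X ∈ L then X' ∈ L_0. -/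
/-- Distance between two functions along a distribution `D` on a finite index set:
`d_D(x,y) = ∑_{i : x i ≠ y i} D i`. -/
noncomputable def dDist {α β : Type*} [Fintype α] (D : α → ℝ) (x y : α → β) : ℝ :=
  letI := Classical.decEq β
  ∑ i, if x i = y i then 0 else D i

/-- Distance from a point to a (nonempty) set of functions:
`d_D(x,L) = min_{y ∈ L} d_D(x,y)`. -/
noncomputable def dSetDist {α β : Type*} [Fintype α] (D : α → ℝ) (x : α → β)
    (L : Set (α → β)) : ℝ :=
  sInf ((fun y => dDist D x y) '' L)

/-- `g^cat(X)` appends a `0` to the string `X ∈ {0,1}^n`. -/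
def gcatS {n : ℕ} (X : Fin n → Bool) : Fin (n + 1) → Bool := Fin.snoc X false

/-!
Since `aᵢ > 6n·pᵢ`, the new weight `aᵢ/(8n)` of a coordinate `i ≤ n` exceeds `3pᵢ/4 ≥ pᵢ/2`,
and the appended coordinate never contributes because `g^cat` puts the same bit there in every
string. So `d_{D'}(g^cat X, g^cat Y) ≥ d_D(X, Y)/2` for all `Y`, and the claim follows by
taking the infimum over `Y ∈ L`.
-/

section Distance

variable {α β : Type*} [Fintype α]

lemma dDist_nonneg {D : α → ℝ} (hD : ∀ i, 0 ≤ D i) (x y : α → β) : 0 ≤ dDist D x y :=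
  Finset.sum_nonneg fun i _ => by split_ifs <;> simp [hD i]

lemma dDist_mono {D D' : α → ℝ} (h : ∀ i, D i ≤ D' i) (x y : α → β) :
    dDist D x y ≤ dDist D' x y :=
  Finset.sum_le_sum fun i _ => by split_ifs <;> simp [h i]

lemma dDist_div (D : α → ℝ) (c : ℝ) (x y : α → β) :
    dDist (fun i => D i / c) x y = dDist D x y / c := by
  unfold dDist
  rw [Finset.sum_div]
  congr 1 with i
  split_ifs <;> simp

lemma dDist_snoc_snoc {n : ℕ} (D : Fin n → ℝ) (d : ℝ) (x y : Fin n → β) (b : β) :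
    dDist (Fin.snoc D d : Fin (n + 1) → ℝ) (Fin.snoc x b : Fin (n + 1) → β) (Fin.snoc y b) =
      dDist D x y := by
  classical
  unfold dDist
  simp only [Fin.sum_univ_castSucc, Fin.snoc_castSucc, Fin.snoc_last, ↓reduceIte, add_zero]

lemma dSetDist_le_dDist {D : α → ℝ} (hD : ∀ i, 0 ≤ D i) (x : α → β) {L : Set (α → β)}
    {y : α → β} (hy : y ∈ L) : dSetDist D x L ≤ dDist D x y :=
  csInf_le ⟨0, by rintro _ ⟨z, -, rfl⟩; exact dDist_nonneg hD x z⟩ ⟨y, hy, rfl⟩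

lemma le_dSetDist {D : α → ℝ} {x : α → β} {L : Set (α → β)} (hL : L.Nonempty) {r : ℝ}
    (h : ∀ y ∈ L, r ≤ dDist D x y) : r ≤ dSetDist D x L :=
  le_csInf (hL.image _) (by rintro _ ⟨y, hy, rfl⟩; exact h y hy)

end Distance

lemma half_le_granularity {m : ℝ} (hm : 0 < m) (x : ℝ) :
    x / 2 ≤ ((⌊6 * m * x⌋₊ + 2 : ℕ) : ℝ) / (8 * m) := by
  have hfloor : 6 * m * x < ((⌊6 * m * x⌋₊ + 2 : ℕ) : ℝ) := by
    push_cast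
    linarith [Nat.lt_floor_add_one (6 * m * x)]
  rw [div_le_div_iff₀ two_pos (by positivity)]
  nlinarith

lemma dDist_granDist_gcatS {n : ℕ} (a : Fin n → ℕ) (X Y : Fin n → Bool) :
    dDist (granDist a) (gcatS X) (gcatS Y) = dDist (fun i => (a i : ℝ)) X Y / (8 * n) := by
  rw [granDist, gcatS, gcatS, dDist_snoc_snoc, dDist_div]

theorem granularise_preserves_distance_general {n : ℕ} (hn : 1 ≤ n) (ε : ℝ)
    (p : Fin n → ℝ) (hp0 : ∀ i, 0 ≤ p i)
    (a : Fin n → ℕ) (ha : ∀ i, a i = ⌊(6 * (n : ℝ)) * p i⌋₊ + 2)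
    (X : Fin n → Bool) (L : Set (Fin n → Bool)) (hL : L.Nonempty) :
    (ε < dSetDist p X L →
      ε / 2 < dSetDist (granDist a) (gcatS X) (gcatS '' L)) ∧
    (X ∈ L → gcatS X ∈ gcatS '' L) := by
  have hweight : ∀ i, p i / 2 ≤ (a i : ℝ) / (8 * n) := fun i => by
    rw [ha i]
    exact half_le_granularity (by exact_mod_cast hn) (p i)
  have hhalve : ∀ Y, dDist p X Y / 2 ≤ dDist (granDist a) (gcatS X) (gcatS Y) := fun Y => by
    rw [dDist_granDist_gcatS, ← dDist_div, ← dDist_div]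
    exact dDist_mono hweight X Y
  refine ⟨fun hd => ?_, Set.mem_image_of_mem gcatS⟩
  have hset : dSetDist p X L / 2 ≤ dSetDist (granDist a) (gcatS X) (gcatS '' L) := by
    refine le_dSetDist (hL.image gcatS) ?_
    rintro _ ⟨Y, hY, rfl⟩
    linarith [dSetDist_le_dDist hp0 X hY, hhalve Y]
  linarith

/-- Granularisation preserves distances: if `d_D(X,L) > ε` then
`d_{D'}(g^cat(X), L₀) > ε/2`, and if `X ∈ L` then `g^cat(X) ∈ L₀`. -/
theorem granularise_preserves_distance {n : ℕ} (hn : 1 ≤ n) (ε : ℝ) (hε : 0 < ε)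
    (p : Fin n → ℝ) (hp0 : ∀ i, 0 ≤ p i) (hp1 : ∑ i, p i = 1)
    (a : Fin n → ℕ) (ha : ∀ i, a i = ⌊(6 * (n : ℝ)) * p i⌋₊ + 2)
    (X : Fin n → Bool) (L : Set (Fin n → Bool)) (hL : L.Nonempty) :
    (ε < dSetDist p X L →
      ε / 2 < dSetDist (granDist a) (gcatS X) (gcatS '' L)) ∧
    (X ∈ L → gcatS X ∈ gcatS '' L) :=
  granularise_preserves_distance_general hn ε p hp0 a ha X L hL
end
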